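/- For $d > 6$, there exists a constant $C = C(d) > 0$ such that for all $x, y \in \mathbb{Z}^d$, $\sum_{z_1, z_2, z_3 \in \mathbb{Z}^d} |z_1-z_2|^{2-d} |z_2-z_3|^{2-d} |z_3-z_1|^{2-d} |x-z_1|^{2-d} |y-z_2|^{2-d} \leq C |x-y|^{4-d}$. -/

import Mathlib

/-!
Write `⟨n⟩ = max n 1`, so that `|x|^{-a}` with the convention `0^{-a} = 1` is `⟨|x|⟩^{-a}`, and
work in `ℝ≥0∞`, where the triple sum splits freely into iterated sums. Everything rests on the
convolution bound `∑_z ⟨|x - z|⟩^{-a} ⟨|z - y|⟩^{-b} ≤ K ⟨|x - y|⟩^{-m}` for `a + b > d`,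
`m ≤ min a b` and `m ≤ a + b - d`. With `r = |x - y|`, split `ℤ^d` into the points within `r / 2`
of `x`, those within `r / 2` of `y`, and the rest. On the first part the second factor is
`≲ r^{-b}`, leaving a sum over a ball of radius `r`; the second part is symmetric; on the rest the
summand is `≲ ⟨|w|⟩^{-(a+b)}` with `w = x - z` or `z - y` and `|w| ≥ r / 2`. Ball and tail sums are
computed sphere by sphere, the sphere of radius `n` having `O(n^{d-1})` points.
Summing over `z₃`, then `z₂`, then `z₁` uses this bound with `(a, b, m) = (d-2, d-2, d-4)`,
`(2d-6, d-2, d-2)` and `(d-2, d-2, d-4)`; the middle step needs `2d - 6 > d`.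
-/

/-- The ℓ∞ norm of a lattice point, as a real number. -/
noncomputable def normInf {d : ℕ} (x : Fin d → ℤ) : ℝ :=
  ((Finset.univ.sup fun i => (x i).natAbs : ℕ) : ℝ)

/-- `ipow x a = |x|^{-a}` with the convention `0^{-a} = 1`. -/
noncomputable def ipow {d : ℕ} (x : Fin d → ℤ) (a : ℝ) : ℝ :=
  if x = 0 then 1 else normInf x ^ (-a)

open scoped ENNReal
open Finset

noncomputable section

namespace LatticeConvolution

def decay (a : ℝ) (n : ℕ) : ℝ≥0∞ := ((max n 1 : ℕ) : ℝ≥0∞) ^ (-a)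

lemma decay_ne_top (a : ℝ) (n : ℕ) : decay a n ≠ ⊤ :=
  ENNReal.rpow_ne_top_of_ne_zero (by positivity) (by simp)

lemma decay_add (a b : ℝ) (n : ℕ) : decay (a + b) n = decay a n * decay b n := by
  rw [decay, neg_add, ENNReal.rpow_add _ _ (by positivity) (by simp)]
  rfl

lemma decay_mul (a : ℝ) {m n : ℕ} (hm : 1 ≤ m) (hn : 1 ≤ n) :
    decay a (m * n) = decay a m * decay a n := by
  rw [decay, decay, decay, max_eq_left hm, max_eq_left hn, max_eq_left (Nat.mul_le_mul hm hn),
    Nat.cast_mul, ENNReal.mul_rpow_of_ne_zero (by positivity) (by positivity)]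

lemma pow_mul_decay (k : ℕ) (a : ℝ) (n : ℕ) :
    ((max n 1 : ℕ) : ℝ≥0∞) ^ k * decay a n = decay (a - k) n := by
  rw [decay, decay, ← ENNReal.rpow_natCast, ← ENNReal.rpow_add _ _ (by positivity) (by simp)]
  ring_nf

lemma decay_le_decay_of_exponent_le {a b : ℝ} (h : a ≤ b) (n : ℕ) : decay b n ≤ decay a n :=
  ENNReal.rpow_le_rpow_of_exponent_le (by exact_mod_cast le_max_right n 1) (neg_le_neg h)

lemma decay_le_decay {a : ℝ} (ha : 0 ≤ a) {m n : ℕ} (h : m ≤ n) : decay a n ≤ decay a m := by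
  rw [decay, decay, ENNReal.rpow_neg, ENNReal.rpow_neg]
  gcongr

lemma decay_le_decay_of_nonpos {c : ℝ} (hc : c ≤ 0) {m n : ℕ} (h : m ≤ n) :
    decay c m ≤ decay c n :=
  ENNReal.rpow_le_rpow (by exact_mod_cast max_le_max_right 1 h) (neg_nonneg.2 hc)

lemma decay_le_two_rpow_mul {a : ℝ} (ha : 0 ≤ a) {r n : ℕ} (h : r ≤ 2 * n) :
    decay a n ≤ 2 ^ a * decay a r := by
  have hr : ((max r 1 : ℕ) : ℝ≥0∞) ≤ 2 * ((max n 1 : ℕ) : ℝ≥0∞) := by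
    exact_mod_cast (show max r 1 ≤ 2 * max n 1 by omega)
  calc decay a n = 2 ^ a * (2 * ((max n 1 : ℕ) : ℝ≥0∞)) ^ (-a) := by
        rw [ENNReal.mul_rpow_of_ne_zero (by norm_num) (by positivity), ← mul_assoc,
          ← ENNReal.rpow_add _ _ (by norm_num) (by norm_num), add_neg_cancel,
          ENNReal.rpow_zero, one_mul, decay]
    _ ≤ 2 ^ a * decay a r := by
        rw [decay, ENNReal.rpow_neg, ENNReal.rpow_neg]
        gcongr

lemma tsum_decay_ne_top {s : ℝ} (hs : 1 < s) : ∑' n, decay s n ≠ ⊤ := by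
  have hsum : Summable fun n : ℕ => ((max n 1 : ℕ) : ℝ) ^ (-s) := by
    rw [← summable_nat_add_iff 1]
    simpa using (summable_nat_add_iff 1).2 (Real.summable_nat_rpow.2 (by linarith : -s < -1))
  have hofReal (n : ℕ) : decay s n = ENNReal.ofReal (((max n 1 : ℕ) : ℝ) ^ (-s)) := by
    rw [decay, ← ENNReal.ofReal_rpow_of_pos (by positivity), ENNReal.ofReal_natCast]
  simp_rw [hofReal]
  rw [← ENNReal.ofReal_tsum_of_nonneg (fun n => by positivity) hsum]
  exact ENNReal.ofReal_ne_top

/-- Grouping `n ≥ N` into the blocks `[m N, (m + 1) N)` with `m ≥ 1`. -/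
lemma tsum_decay_tail_le {s : ℝ} (hs : 0 ≤ s) (N : ℕ) :
    ∑' n, (if N ≤ n then decay s n else 0) ≤ (∑' n, decay s n) * decay (s - 1) N := by
  rcases Nat.eq_zero_or_pos N with rfl | hN
  · simp [decay]
  have : NeZero N := ⟨hN.ne'⟩
  have hblock (m : ℕ) (k : Fin N) :
      (if N ≤ m * N + k then decay s (m * N + k) else 0) ≤ decay s m * decay s N := by
    split_ifs with h
    · have hm : 1 ≤ m := by
        by_contra! hm
        simp [Nat.lt_one_iff.1 hm] at h
        omega
      rw [← decay_mul s hm hN]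
      exact decay_le_decay hs (Nat.le_add_right _ _)
    · exact zero_le
  have hN' : (N : ℝ≥0∞) * decay s N = decay (s - 1) N := by
    simpa [max_eq_left (Nat.one_le_iff_ne_zero.2 hN.ne')] using pow_mul_decay 1 s N
  calc ∑' n, (if N ≤ n then decay s n else 0)
      = ∑' m, ∑' k : Fin N, (if N ≤ m * N + k then decay s (m * N + k) else 0) := by
        rw [← ENNReal.tsum_prod, ← (Nat.divModEquiv N).symm.tsum_eq]
        rfl
    _ ≤ ∑' m, ∑' _ : Fin N, decay s m * decay s N :=
        ENNReal.tsum_le_tsum fun m => ENNReal.tsum_le_tsum fun k => hblock m k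
    _ = (∑' n, decay s n) * decay (s - 1) N := by
        simp only [tsum_fintype, sum_const, card_univ, Fintype.card_fin, nsmul_eq_mul, ← hN',
          ← ENNReal.tsum_mul_right]
        exact tsum_congr fun m => by ring

lemma tsum_decay_initial_le {c : ℝ} (hc : c ≤ 0) (R : ℕ) :
    ∑' n, (if n ≤ R then decay c n else 0) ≤ 2 * decay (c - 1) R := by
  rw [tsum_eq_sum (s := range (R + 1)) fun n hn => if_neg (by simpa [Nat.lt_succ_iff] using hn)]
  calc ∑ n ∈ range (R + 1), (if n ≤ R then decay c n else 0)
      ≤ ∑ _n ∈ range (R + 1), decay c R :=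
        sum_le_sum fun n hn => by
          rw [if_pos (Nat.lt_succ_iff.1 (mem_range.1 hn))]
          exact decay_le_decay_of_nonpos hc (Nat.lt_succ_iff.1 (mem_range.1 hn))
    _ ≤ 2 * ((max R 1 : ℕ) : ℝ≥0∞) ^ 1 * decay c R := by
        rw [sum_const, card_range, nsmul_eq_mul, pow_one]
        gcongr
        exact_mod_cast (show R + 1 ≤ 2 * max R 1 by omega)
    _ = 2 * decay (c - 1) R := by rw [mul_assoc, pow_mul_decay, Nat.cast_one]

variable {d : ℕ}

def natNorm (z : Fin d → ℤ) : ℕ := univ.sup fun i => (z i).natAbs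

lemma natNorm_le_iff {z : Fin d → ℤ} {n : ℕ} : natNorm z ≤ n ↔ ∀ i, (z i).natAbs ≤ n := by
  simp [natNorm]

lemma natNorm_neg (z : Fin d → ℤ) : natNorm (-z) = natNorm z := by
  simp [natNorm]

lemma natNorm_sub_comm (x y : Fin d → ℤ) : natNorm (x - y) = natNorm (y - x) := by
  rw [← neg_sub, natNorm_neg]

lemma natNorm_add_le (x y : Fin d → ℤ) : natNorm (x + y) ≤ natNorm x + natNorm y :=
  natNorm_le_iff.2 fun i => (Int.natAbs_add_le _ _).trans <|
    add_le_add (natNorm_le_iff.1 le_rfl i) (natNorm_le_iff.1 le_rfl i)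

def box (d n : ℕ) : Finset (Fin d → ℤ) := Fintype.piFinset fun _ => Icc (-(n : ℤ)) n

lemma mem_box {z : Fin d → ℤ} {n : ℕ} : z ∈ box d n ↔ natNorm z ≤ n := by
  simp only [box, Fintype.mem_piFinset, mem_Icc, natNorm_le_iff]
  exact forall_congr' fun i => by omega

lemma box_mono {m n : ℕ} (h : m ≤ n) : box d m ⊆ box d n := fun _ hz =>
  mem_box.2 ((mem_box.1 hz).trans h)

lemma card_box (d n : ℕ) : #(box d n) = (2 * n + 1) ^ d := by
  simp only [box, Fintype.card_piFinset, Int.card_Icc, prod_const, card_univ, Fintype.card_fin]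
  congr 1
  omega

def sphere (d n : ℕ) : Finset (Fin d → ℤ) := {z ∈ box d n | natNorm z = n}

lemma mem_sphere {z : Fin d → ℤ} {n : ℕ} : z ∈ sphere d n ↔ natNorm z = n := by
  simp +contextual [sphere, mem_box]

lemma card_sphere_le (hd : 0 < d) (n : ℕ) :
    #(sphere d n) ≤ 2 * d * 3 ^ (d - 1) * max n 1 ^ (d - 1) := by
  obtain _ | k := n
  · calc #(sphere d 0) ≤ #(box d 0) := card_le_card (filter_subset _ _)
      _ = 1 := by simp [card_box]
      _ ≤ 2 * d * 3 ^ (d - 1) * max 0 1 ^ (d - 1) := by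
          simp only [zero_le, max_eq_right, one_pow, mul_one]
          have := Nat.one_le_pow (d - 1) 3 (by norm_num)
          nlinarith
  have hsub : sphere d (k + 1) ⊆ box d (k + 1) \ box d k := fun z hz => by
    rw [mem_sphere] at hz
    rw [mem_sdiff, mem_box, mem_box]
    omega
  calc #(sphere d (k + 1)) ≤ #(box d (k + 1) \ box d k) := card_le_card hsub
    _ = (2 * (k + 1) + 1) ^ d - (2 * k + 1) ^ d := by
        rw [card_sdiff_of_subset (box_mono (Nat.le_succ k)), card_box, card_box]
    _ ≤ d * 2 * (2 * k + 3) ^ (d - 1) := by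
        grind [abs_pow_sub_pow_le (α := ℤ) (2 * k + 3) (2 * k + 1) d]
    _ ≤ 2 * d * (3 * (k + 1)) ^ (d - 1) := by
        rw [mul_comm d 2]
        gcongr
        omega
    _ = 2 * d * 3 ^ (d - 1) * max (k + 1) 1 ^ (d - 1) := by
        rw [max_eq_left (Nat.le_add_left 1 k), mul_pow]
        ring

lemma tsum_radial_le (hd : 0 < d) (g : ℕ → ℝ≥0∞) :
    ∑' z : Fin d → ℤ, g (natNorm z) ≤
      (2 * d * 3 ^ (d - 1) : ℕ) * ∑' n, ((max n 1 : ℕ) : ℝ≥0∞) ^ (d - 1) * g n := by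
  calc ∑' z : Fin d → ℤ, g (natNorm z)
      = ∑' n, ∑' z : Fin d → ℤ, if n = natNorm z then g n else 0 := by
        rw [ENNReal.tsum_comm]
        exact tsum_congr fun z => (tsum_ite_eq (natNorm z) _).symm
    _ = ∑' n, (#(sphere d n) : ℝ≥0∞) * g n := by
        refine tsum_congr fun n => ?_
        rw [tsum_eq_sum (s := sphere d n) fun z hz => if_neg fun h => hz (mem_sphere.2 h.symm),
          sum_ite_of_true fun z hz => (mem_sphere.1 hz).symm, sum_const, nsmul_eq_mul]
    _ ≤ ∑' n, ((2 * d * 3 ^ (d - 1) * max n 1 ^ (d - 1) : ℕ) : ℝ≥0∞) * g n :=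
        ENNReal.tsum_le_tsum fun n => by gcongr; exact card_sphere_le hd n
    _ = _ := by
        rw [← ENNReal.tsum_mul_left]
        push_cast
        ring_nf

def tailSum (d : ℕ) (c : ℝ) (N : ℕ) : ℝ≥0∞ :=
  ∑' z : Fin d → ℤ, if N ≤ natNorm z then decay c (natNorm z) else 0

def ballSum (d : ℕ) (a : ℝ) (R : ℕ) : ℝ≥0∞ :=
  ∑' z : Fin d → ℤ, if natNorm z ≤ R then decay a (natNorm z) else 0

lemma exists_tailSum_le (hd : 0 < d) {c : ℝ} (hc : d < c) :
    ∃ K : ℝ≥0∞, K ≠ ⊤ ∧ ∀ N : ℕ, tailSum d c N ≤ K * decay (c - d) N := by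
  have hs : 1 < c - (d - 1 : ℕ) := by rw [Nat.cast_pred hd]; linarith
  refine ⟨(2 * d * 3 ^ (d - 1) : ℕ) * ∑' n, decay (c - (d - 1 : ℕ)) n,
    ENNReal.mul_ne_top (ENNReal.natCast_ne_top _) (tsum_decay_ne_top hs), fun N => ?_⟩
  refine (tsum_radial_le hd fun n => if N ≤ n then decay c n else 0).trans ?_
  simp_rw [mul_ite, mul_zero, pow_mul_decay, mul_assoc]
  gcongr
  refine (tsum_decay_tail_le (by linarith) N).trans_eq ?_
  rw [Nat.cast_pred hd, sub_sub, sub_add_cancel]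

/-- Each sphere of radius `n ≤ R` contributes `≲ n^{d-1-a} ≤ R^{d-1-a}`; this is where
`a ≤ d - 1` enters. -/
lemma ballSum_le (hd : 0 < d) {a : ℝ} (ha : a ≤ d - 1) (R : ℕ) :
    ballSum d a R ≤ (2 * d * 3 ^ (d - 1) : ℕ) * (2 * decay (a - d) R) := by
  refine (tsum_radial_le hd fun n => if n ≤ R then decay a n else 0).trans ?_
  simp_rw [mul_ite, mul_zero, pow_mul_decay]
  gcongr
  refine (tsum_decay_initial_le (by rw [Nat.cast_pred hd]; linarith) R).trans_eq ?_
  rw [Nat.cast_pred hd, sub_sub, sub_add_cancel]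

lemma exists_ballSum_le (hd : 0 < d) {a e : ℝ} (ha : a ≤ d - 1 ∨ d < a) (he : 0 ≤ e)
    (hae : d - a ≤ e) :
    ∃ K : ℝ≥0∞, K ≠ ⊤ ∧ ∀ R : ℕ, ballSum d a R ≤ K * decay (-e) R := by
  rcases ha with ha | ha
  · refine ⟨(2 * d * 3 ^ (d - 1) : ℕ) * 2, by finiteness, fun R => ?_⟩
    refine (ballSum_le hd ha R).trans ?_
    rw [← mul_assoc]
    gcongr
    exact decay_le_decay_of_exponent_le (by linarith) R
  · obtain ⟨K, hK, hsum⟩ := exists_tailSum_le hd ha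
    refine ⟨K, hK, fun R => ?_⟩
    calc ballSum d a R ≤ tailSum d a 0 :=
          ENNReal.tsum_le_tsum fun z => by split_ifs <;> simp_all
      _ ≤ K * decay (a - d) 0 := hsum 0
      _ ≤ K * decay (-e) R := by
          rw [show decay (a - d) 0 = decay 0 R by simp [decay]]
          gcongr
          exact decay_le_decay_of_exponent_le (by linarith) R

/-- The pointwise form of the three-region splitting, with `u = |x - z|`, `v = |z - y|`,
`r = |x - y|`; `(r + 1) / 2` is `⌈r / 2⌉`. -/
lemma decay_mul_decay_le {a b : ℝ} (ha : 0 ≤ a) (hb : 0 ≤ b) {u v r : ℕ} (h : r ≤ u + v) :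
    decay a u * decay b v ≤
      2 ^ b * decay b r * (if u ≤ r then decay a u else 0) +
      2 ^ a * decay a r * (if v ≤ r then decay b v else 0) +
      (if (r + 1) / 2 ≤ u then decay (a + b) u else 0) +
      (if (r + 1) / 2 ≤ v then decay (a + b) v else 0) := by
  by_cases hu : 2 * u < r
  · refine le_add_right (le_add_right (le_add_right ?_))
    rw [if_pos (by omega), mul_comm]
    gcongr
    exact decay_le_two_rpow_mul hb (by omega)
  by_cases hv : 2 * v < r
  · refine le_add_right (le_add_right (le_add_left ?_))
    rw [if_pos (by omega)]
    gcongr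
    exact decay_le_two_rpow_mul ha (by omega)
  rcases le_total u v with huv | hvu
  · refine le_add_right (le_add_left ?_)
    rw [if_pos (by omega), decay_add]
    gcongr
    exact decay_le_decay hb huv
  · refine le_add_left ?_
    rw [if_pos (by omega), decay_add]
    gcongr
    exact decay_le_decay ha hvu

def decayKernel (a : ℝ) (x y : Fin d → ℤ) : ℝ≥0∞ := decay a (natNorm (x - y))

lemma decayKernel_ne_top (a : ℝ) (x y : Fin d → ℤ) : decayKernel a x y ≠ ⊤ :=
  decay_ne_top a _

lemma decayKernel_comm (a : ℝ) (x y : Fin d → ℤ) : decayKernel a x y = decayKernel a y x := by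
  rw [decayKernel, decayKernel, natNorm_sub_comm]

lemma decayKernel_add (a b : ℝ) (x y : Fin d → ℤ) :
    decayKernel (a + b) x y = decayKernel a x y * decayKernel b x y :=
  decay_add a b _

lemma tsum_natNorm_sub_left (g : ℕ → ℝ≥0∞) (x : Fin d → ℤ) :
    ∑' z, g (natNorm (x - z)) = ∑' z : Fin d → ℤ, g (natNorm z) :=
  (Equiv.subLeft x).tsum_eq (g ∘ natNorm)

lemma tsum_natNorm_sub_right (g : ℕ → ℝ≥0∞) (y : Fin d → ℤ) :
    ∑' z, g (natNorm (z - y)) = ∑' z : Fin d → ℤ, g (natNorm z) :=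
  (Equiv.subRight y).tsum_eq (g ∘ natNorm)

lemma tsum_decayKernel_mul_le {a b : ℝ} (ha : 0 ≤ a) (hb : 0 ≤ b) (x y : Fin d → ℤ) :
    ∑' z, decayKernel a x z * decayKernel b z y ≤
      2 ^ b * decayKernel b x y * ballSum d a (natNorm (x - y)) +
      2 ^ a * decayKernel a x y * ballSum d b (natNorm (x - y)) +
      tailSum d (a + b) ((natNorm (x - y) + 1) / 2) +
      tailSum d (a + b) ((natNorm (x - y) + 1) / 2) := by
  set r := natNorm (x - y)
  calc ∑' z, decayKernel a x z * decayKernel b z y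
      ≤ ∑' z, (2 ^ b * decay b r * (if natNorm (x - z) ≤ r then decay a (natNorm (x - z)) else 0) +
          2 ^ a * decay a r * (if natNorm (z - y) ≤ r then decay b (natNorm (z - y)) else 0) +
          (if (r + 1) / 2 ≤ natNorm (x - z) then decay (a + b) (natNorm (x - z)) else 0) +
          (if (r + 1) / 2 ≤ natNorm (z - y) then decay (a + b) (natNorm (z - y)) else 0)) :=
        ENNReal.tsum_le_tsum fun z => decay_mul_decay_le ha hb <| by
          simpa using natNorm_add_le (x - z) (z - y)
    _ = _ := by
        rw [ENNReal.tsum_add, ENNReal.tsum_add, ENNReal.tsum_add, ENNReal.tsum_mul_left,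
          ENNReal.tsum_mul_left, tsum_natNorm_sub_left (fun n => if n ≤ r then decay a n else 0),
          tsum_natNorm_sub_right (fun n => if n ≤ r then decay b n else 0),
          tsum_natNorm_sub_left (fun n => if (r + 1) / 2 ≤ n then decay (a + b) n else 0),
          tsum_natNorm_sub_right (fun n => if (r + 1) / 2 ≤ n then decay (a + b) n else 0)]
        rfl

theorem exists_tsum_decayKernel_mul_le (hd : 0 < d) {a b m : ℝ} (ha : 0 ≤ a) (hb : 0 ≤ b)
    (hma : m ≤ a) (hmb : m ≤ b) (hm : m ≤ a + b - d) (hab : d < a + b)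
    (ha' : a ≤ d - 1 ∨ d < a) (hb' : b ≤ d - 1 ∨ d < b) :
    ∃ K : ℝ≥0∞, K ≠ ⊤ ∧ ∀ x y : Fin d → ℤ,
      ∑' z, decayKernel a x z * decayKernel b z y ≤ K * decayKernel m x y := by
  obtain ⟨Ka, hKa, hA⟩ := exists_ballSum_le hd ha' (e := b - m) (by linarith) (by linarith)
  obtain ⟨Kb, hKb, hB⟩ := exists_ballSum_le hd hb' (e := a - m) (by linarith) (by linarith)
  obtain ⟨Kt, hKt, hT⟩ := exists_tailSum_le hd hab
  refine ⟨2 ^ b * Ka + 2 ^ a * Kb + 2 ^ (a + b - d) * Kt + 2 ^ (a + b - d) * Kt,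
    by finiteness, fun x y => (tsum_decayKernel_mul_le ha hb x y).trans ?_⟩
  simp only [decayKernel]
  set r := natNorm (x - y)
  have hball {a' b' : ℝ} {K : ℝ≥0∞} (hK : ∀ R, ballSum d a' R ≤ K * decay (-(b' - m)) R) :
      2 ^ b' * decay b' r * ballSum d a' r ≤ 2 ^ b' * K * decay m r :=
    calc _ ≤ 2 ^ b' * decay b' r * (K * decay (-(b' - m)) r) := by gcongr; exact hK r
      _ = 2 ^ b' * K * decay (b' + -(b' - m)) r := by rw [decay_add]; ring
      _ = 2 ^ b' * K * decay m r := by ring_nf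
  have htail : tailSum d (a + b) ((r + 1) / 2) ≤ 2 ^ (a + b - d) * Kt * decay m r :=
    calc _ ≤ Kt * decay (a + b - d) ((r + 1) / 2) := hT _
      _ ≤ Kt * (2 ^ (a + b - d) * decay (a + b - d) r) := by
          gcongr
          exact decay_le_two_rpow_mul (by linarith) (by omega)
      _ ≤ Kt * (2 ^ (a + b - d) * decay m r) := by
          gcongr
          exact decay_le_decay_of_exponent_le hm r
      _ = 2 ^ (a + b - d) * Kt * decay m r := by ring
  calc _ ≤ 2 ^ b * Ka * decay m r + 2 ^ a * Kb * decay m r + 2 ^ (a + b - d) * Kt * decay m r +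
        2 ^ (a + b - d) * Kt * decay m r :=
        add_le_add (add_le_add (add_le_add (hball hA) (hball hB)) htail) htail
    _ = _ := by ring

theorem tsum_triangle_le {p q : ℝ} {K₁ K₂ : ℝ≥0∞}
    (H₁ : ∀ x y : Fin d → ℤ, ∑' z, decayKernel p x z * decayKernel p z y ≤ K₁ * decayKernel q x y)
    (H₂ : ∀ x y : Fin d → ℤ,
      ∑' z, decayKernel (p + q) x z * decayKernel p z y ≤ K₂ * decayKernel p x y)
    (x y : Fin d → ℤ) :
    ∑' z : (Fin d → ℤ) × (Fin d → ℤ) × (Fin d → ℤ),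
      decayKernel p z.1 z.2.1 * decayKernel p z.2.1 z.2.2 * decayKernel p z.2.2 z.1 *
        decayKernel p x z.1 * decayKernel p y z.2.1 ≤ K₁ * K₂ * K₁ * decayKernel q x y := by
  have sum_z₃ (z₁ z₂ : Fin d → ℤ) :
      ∑' z₃, decayKernel p z₁ z₂ * decayKernel p z₂ z₃ * decayKernel p z₃ z₁ *
        decayKernel p x z₁ * decayKernel p y z₂ ≤
      decayKernel p x z₁ * K₁ * (decayKernel (p + q) z₁ z₂ * decayKernel p z₂ y) :=
    calc _ = decayKernel p z₁ z₂ * decayKernel p x z₁ * decayKernel p y z₂ *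
          ∑' z₃, decayKernel p z₂ z₃ * decayKernel p z₃ z₁ := by
          rw [← ENNReal.tsum_mul_left]
          exact tsum_congr fun _ => by ring
      _ ≤ decayKernel p z₁ z₂ * decayKernel p x z₁ * decayKernel p y z₂ *
          (K₁ * decayKernel q z₂ z₁) := by gcongr; exact H₁ _ _
      _ = _ := by
          rw [decayKernel_add, decayKernel_comm q z₂, decayKernel_comm p y]
          ring
  have sum_z₂ (z₁ : Fin d → ℤ) :
      ∑' z₂, decayKernel p x z₁ * K₁ * (decayKernel (p + q) z₁ z₂ * decayKernel p z₂ y) ≤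
        K₁ * K₂ * (decayKernel p x z₁ * decayKernel p z₁ y) :=
    calc _ ≤ decayKernel p x z₁ * K₁ * (K₂ * decayKernel p z₁ y) := by
          rw [ENNReal.tsum_mul_left]
          gcongr
          exact H₂ _ _
      _ = _ := by ring
  calc _ = ∑' z₁, ∑' z₂, ∑' z₃, decayKernel p z₁ z₂ * decayKernel p z₂ z₃ *
        decayKernel p z₃ z₁ * decayKernel p x z₁ * decayKernel p y z₂ := by
        rw [ENNReal.tsum_prod']
        exact tsum_congr fun _ => ENNReal.tsum_prod'
    _ ≤ ∑' z₁, ∑' z₂, decayKernel p x z₁ * K₁ *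
        (decayKernel (p + q) z₁ z₂ * decayKernel p z₂ y) :=
        ENNReal.tsum_le_tsum fun z₁ => ENNReal.tsum_le_tsum fun z₂ => sum_z₃ z₁ z₂
    _ ≤ ∑' z₁, K₁ * K₂ * (decayKernel p x z₁ * decayKernel p z₁ y) :=
        ENNReal.tsum_le_tsum sum_z₂
    _ ≤ K₁ * K₂ * (K₁ * decayKernel q x y) := by
        rw [ENNReal.tsum_mul_left]
        gcongr
        exact H₁ x y
    _ = _ := by ring

lemma ipow_sub_eq_toReal (a : ℝ) (x y : Fin d → ℤ) :
    ipow (x - y) a = (decayKernel a x y).toReal := by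
  rw [decayKernel, decay, ← ENNReal.toReal_rpow, ipow, normInf]
  split_ifs with h
  · rw [h]
    simp [natNorm]
  · have : 1 ≤ natNorm (x - y) := Nat.one_le_iff_ne_zero.2 fun h0 => h (by
      ext i
      simpa using natNorm_le_iff.1 h0.le i)
    rw [max_eq_left this]
    rfl

end LatticeConvolution

end

open LatticeConvolution in
/-- For `d > 6` there is `C = C(d) > 0` such that for all `x, y ∈ ℤ^d`,
`∑_{z₁,z₂,z₃} |z₁-z₂|^{2-d}|z₂-z₃|^{2-d}|z₃-z₁|^{2-d}|x-z₁|^{2-d}|y-z₂|^{2-d}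
  ≤ C |x-y|^{4-d}`. -/
theorem triple_convolution (d : ℕ) (hd : 6 < d) :
    ∃ C : ℝ, 0 < C ∧ ∀ x y : Fin d → ℤ,
      (∑' z : (Fin d → ℤ) × (Fin d → ℤ) × (Fin d → ℤ),
          ipow (z.1 - z.2.1) ((d : ℝ) - 2) * ipow (z.2.1 - z.2.2) ((d : ℝ) - 2) *
            ipow (z.2.2 - z.1) ((d : ℝ) - 2) * ipow (x - z.1) ((d : ℝ) - 2) *
            ipow (y - z.2.1) ((d : ℝ) - 2)) ≤
        C * ipow (x - y) ((d : ℝ) - 4) := by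
  have hd' : (6 : ℝ) < d := by exact_mod_cast hd
  obtain ⟨K₁, hK₁, H₁⟩ := exists_tsum_decayKernel_mul_le (d := d) (a := d - 2) (b := d - 2)
    (m := d - 4) (by omega) (by linarith) (by linarith) (by linarith) (by linarith) (by linarith)
    (by linarith) (.inl (by linarith)) (.inl (by linarith))
  obtain ⟨K₂, hK₂, H₂⟩ := exists_tsum_decayKernel_mul_le (d := d) (a := (d - 2) + (d - 4))
    (b := d - 2) (m := d - 2) (by omega) (by linarith) (by linarith) (by linarith) (by linarith)
    (by linarith) (by linarith) (.inr (by linarith)) (.inl (by linarith))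
  refine ⟨(K₁ * K₂ * K₁).toReal + 1, by positivity, fun x y => ?_⟩
  calc _ = (∑' z : (Fin d → ℤ) × (Fin d → ℤ) × (Fin d → ℤ),
        decayKernel (d - 2) z.1 z.2.1 * decayKernel (d - 2) z.2.1 z.2.2 *
          decayKernel (d - 2) z.2.2 z.1 * decayKernel (d - 2) x z.1 *
          decayKernel (d - 2) y z.2.1).toReal := by
        simp only [ipow_sub_eq_toReal, ← ENNReal.toReal_mul]
        exact (ENNReal.tsum_toReal_eq fun _ => by
          simp [ENNReal.mul_eq_top, decayKernel_ne_top]).symm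
    _ ≤ (K₁ * K₂ * K₁ * decayKernel (d - 4) x y).toReal :=
        ENNReal.toReal_mono (ENNReal.mul_ne_top (by finiteness) (decayKernel_ne_top _ _ _))
          (tsum_triangle_le H₁ H₂ x y)
    _ ≤ _ := by
        rw [ENNReal.toReal_mul, ipow_sub_eq_toReal]
        exact mul_le_mul_of_nonneg_right (le_add_of_nonneg_right zero_le_one) ENNReal.toReal_nonneg
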